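/- arXiv:2602.19739 — 2 statements merged into one kernel-verified Lean document; each statement's English description precedes it below -/
import Mathlib

section
/- Let V be a real inner product space of dimension n ≥ 2, θ a nonzero covector in V*, and φ a symmetric bilinear form on V. If θ_k φ_{ij} = (1/(n+1))(g_{ki} α_j + g_{kj} α_i) for all indices, where α_j := θ^l φ_{lj} is the contraction of φ with θ (indices raised with the inner product g), then φ = 0. -/
/-!
Contracting the symbol equation `θ_k φ_{ij} = c (δ_{ki} α_j + δ_{kj} α_i)` successively with `θ`
in `k`, `i` and `j` gives, with `T = |θ|²` and `β = θ^j α_j`,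
`T φ_{ij} = c (θ_i α_j + θ_j α_i)`, `T α_j = c (T α_j + β θ_j)` and `T β = 2 c T β`.
Since `T ≠ 0` and `c = 1/(n+1)` is neither `1` nor `1/2`, the last identity gives `β = 0`,
the middle one `α = 0`, and the first one `φ = 0`.
-/

open Finset Matrix

section Contraction

variable {ι R : Type*} [Fintype ι] [DecidableEq ι] [CommSemiring R] {c : R} {θ : ι → R}
  {φ : Matrix ι ι R}

theorem dotProduct_self_smul_eq_of_sinjukov_symbol
    (h : ∀ k i j, θ k * φ i j =
      c * ((1 : Matrix ι ι R) k i * (θ ᵥ* φ) j + (1 : Matrix ι ι R) k j * (θ ᵥ* φ) i)) :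
    (θ ⬝ᵥ θ) • φ = c • (vecMulVec θ (θ ᵥ* φ) + vecMulVec (θ ᵥ* φ) θ) := by
  ext i j
  have hδ : ∀ i, ∑ k, θ k * (1 : Matrix ι ι R) k i = θ i := congrFun (vecMul_one θ)
  calc ((θ ⬝ᵥ θ) • φ) i j = ∑ k, θ k * (θ k * φ i j) := by
        simp only [Matrix.smul_apply, smul_eq_mul, dotProduct, sum_mul, mul_assoc]
    _ = c * ((∑ k, θ k * (1 : Matrix ι ι R) k i) * (θ ᵥ* φ) j +
          (∑ k, θ k * (1 : Matrix ι ι R) k j) * (θ ᵥ* φ) i) := by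
        simp only [h, mul_add, sum_add_distrib, mul_sum, sum_mul]
        congr 1 <;> exact sum_congr rfl fun _ _ => by ring
    _ = _ := by
        simp only [hδ, Matrix.smul_apply, Matrix.add_apply, vecMulVec_apply, smul_eq_mul]
        ring

end Contraction

section Field

variable {ι K : Type*} [Fintype ι] [Field K] {c : K} {θ : ι → K} {φ : Matrix ι ι K}

theorem eq_zero_of_dotProduct_self_smul_eq (hT : θ ⬝ᵥ θ ≠ 0) (hc : c ≠ 1) (hc₂ : 2 * c ≠ 1)
    (hφ : (θ ⬝ᵥ θ) • φ = c • (vecMulVec θ (θ ᵥ* φ) + vecMulVec (θ ᵥ* φ) θ)) :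
    φ = 0 := by
  set T := θ ⬝ᵥ θ
  set α := θ ᵥ* φ
  have hα : T • α = c • (T • α + (θ ⬝ᵥ α) • θ) := by
    simpa only [vecMul_smul, vecMul_add, vecMul_vecMulVec] using congrArg (θ ᵥ* ·) hφ
  have hβ : (1 - 2 * c) * (T * (θ ⬝ᵥ α)) = 0 := by
    have := congrArg (θ ⬝ᵥ ·) hα
    simp only [dotProduct_smul, dotProduct_add, smul_eq_mul] at this
    linear_combination this
  have hβ₀ : θ ⬝ᵥ α = 0 := by
    simpa [sub_eq_zero, hT, Ne.symm hc₂] using hβ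
  have hα₀ : α = 0 := by
    rw [hβ₀, zero_smul, add_zero, smul_smul] at hα
    have : ((1 - c) * T) • α = 0 := by rw [sub_mul, one_mul, sub_smul, ← hα, sub_self]
    exact (smul_eq_zero.mp this).resolve_left (mul_ne_zero (sub_ne_zero.mpr hc.symm) hT)
  rw [hα₀, zero_vecMulVec, vecMulVec_zero, add_zero, smul_zero, smul_eq_zero] at hφ
  exact hφ.resolve_left hT

end Field

theorem sinjukov_symbol_injective_general (n : ℕ) (hn : 2 ≤ n)
    (θ : Fin n → ℝ) (hθ : θ ≠ 0)
    (φ : Fin n → Fin n → ℝ)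
    (h : ∀ k i j, θ k * φ i j =
      (1 / (n + 1)) * ((if k = i then (1:ℝ) else 0) * (∑ l, θ l * φ l j) +
        (if k = j then (1:ℝ) else 0) * (∑ l, θ l * φ l i))) :
    φ = 0 := by
  have hn' : (2 : ℝ) ≤ n := by exact_mod_cast hn
  have hT : θ ⬝ᵥ θ ≠ 0 := fun h0 => hθ (dotProduct_self_eq_zero.mp h0)
  have hc : 1 / ((n : ℝ) + 1) ≠ 1 := by
    rw [Ne, div_eq_one_iff_eq (by positivity)]; linarith
  have hc₂ : 2 * (1 / ((n : ℝ) + 1)) ≠ 1 := by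
    rw [Ne, mul_one_div, div_eq_one_iff_eq (by positivity)]; linarith
  refine eq_zero_of_dotProduct_self_smul_eq hT hc hc₂
    (dotProduct_self_smul_eq_of_sinjukov_symbol ?_)
  intro k i j
  rw [one_apply, one_apply]
  exact h k i j

/-- Injectivity of the principal symbol of the Sinjukov operator `S`:
in an orthonormal basis of an `n`-dimensional real inner product space (`n ≥ 2`),
if `θ ≠ 0` and `θ_k φ_{ij} = (1/(n+1))(δ_{ki} α_j + δ_{kj} α_i)` where
`α_j = ∑_l θ_l φ_{lj}`, then `φ = 0`. -/
theorem sinjukov_symbol_injective (n : ℕ) (hn : 2 ≤ n)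
    (θ : Fin n → ℝ) (hθ : θ ≠ 0)
    (φ : Fin n → Fin n → ℝ) (hsym : ∀ i j, φ i j = φ j i)
    (h : ∀ k i j, θ k * φ i j =
      (1 / (n + 1)) * ((if k = i then (1:ℝ) else 0) * (∑ l, θ l * φ l j) +
        (if k = j then (1:ℝ) else 0) * (∑ l, θ l * φ l i))) :
    φ = 0 :=
  sinjukov_symbol_injective_general n hn θ hθ φ h
end

section
/- Let V be a real inner product space of dimension n ≥ 2, and ω a nonzero covector. Define the linear map σ: V* → V* ⊗ Sym²(V*) by (σθ)_{kij} = (n+1) ω_k (ω_i θ_j + ω_j θ_i) − 2 g_{ij} ω_k (ω^l θ_l) − g_{kj} ω_i (ω^l θ_l) − g_{ki} ω_j (ω^l θ_l). Then σ is injective: σθ = 0 implies θ = 0. -/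
open Finset

/-!
Contracting `σθ` over `k = i` gives `(n + 1) |ω|² θ - 2 (ω·θ) ω`. If `σθ = 0`, pairing this
with `ω` gives `(n - 1) |ω|² (ω·θ) = 0`, so `ω·θ = 0` as `n ≥ 2`, and then `(n + 1) |ω|² θ = 0`.
-/

section

variable {ι : Type*} [Fintype ι] [DecidableEq ι]

/-- `(σθ)_{kij}` for the standard metric `g_{ij} = δ_{ij}` and `n = card ι`. -/
def eisenhartSymbol (ω θ : ι → ℝ) (k i j : ι) : ℝ :=
  ((Fintype.card ι : ℝ) + 1) * ω k * (ω i * θ j + ω j * θ i) -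
    2 * (if i = j then (1:ℝ) else 0) * ω k * (ω ⬝ᵥ θ) -
    (if k = j then (1:ℝ) else 0) * ω i * (ω ⬝ᵥ θ) -
    (if k = i then (1:ℝ) else 0) * ω j * (ω ⬝ᵥ θ)

theorem sum_eisenhartSymbol_diag (ω θ : ι → ℝ) :
    (fun j => ∑ k, eisenhartSymbol ω θ k k j) =
      ((Fintype.card ι + 1) * (ω ⬝ᵥ ω)) • θ - (2 * (ω ⬝ᵥ θ)) • ω := by
  ext j
  simp only [eisenhartSymbol, sum_sub_distrib, ite_mul, one_mul, zero_mul, mul_ite, mul_zero,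
    sum_ite_eq', mem_univ, if_true, sum_const, card_univ, nsmul_eq_mul, Pi.sub_apply,
    Pi.smul_apply, smul_eq_mul]
  have hsum : ∑ k, ((Fintype.card ι : ℝ) + 1) * ω k * (ω k * θ j + ω j * θ k) =
      ((Fintype.card ι : ℝ) + 1) * (ω ⬝ᵥ ω) * θ j +
        ((Fintype.card ι : ℝ) + 1) * ω j * (ω ⬝ᵥ θ) := by
    simp only [dotProduct, mul_sum, sum_mul, ← sum_add_distrib]
    exact sum_congr rfl fun k _ => by ring
  rw [hsum]
  ring

theorem eq_zero_of_eisenhartSymbol_eq_zero (hn : 2 ≤ Fintype.card ι) {ω : ι → ℝ} (hω : ω ≠ 0)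
    {θ : ι → ℝ} (h : ∀ k i j, eisenhartSymbol ω θ k i j = 0) : θ = 0 := by
  have hS : ω ⬝ᵥ ω ≠ 0 := fun h0 => hω (dotProduct_self_eq_zero.mp h0)
  have htrace : ((Fintype.card ι + 1) * (ω ⬝ᵥ ω)) • θ = (2 * (ω ⬝ᵥ θ)) • ω := by
    rw [← sub_eq_zero, ← sum_eisenhartSymbol_diag]
    ext j
    simp [h]
  have hc : ω ⬝ᵥ θ = 0 := by
    have hpair := congrArg (ω ⬝ᵥ ·) htrace
    simp only [dotProduct_smul, smul_eq_mul] at hpair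
    have hN : (Fintype.card ι : ℝ) - 1 ≠ 0 := by
      have : (2 : ℝ) ≤ Fintype.card ι := by exact_mod_cast hn
      linarith
    have : ((Fintype.card ι : ℝ) - 1) * (ω ⬝ᵥ ω) * (ω ⬝ᵥ θ) = 0 := by
      linear_combination hpair
    simpa [hN, hS] using this
  rw [hc, mul_zero, zero_smul] at htrace
  exact (smul_eq_zero.mp htrace).resolve_left (mul_ne_zero (by positivity) hS)

end

/-- Injectivity of the principal symbol of the Eisenhart operator `E`:
for a nonzero covector `ω` on an `n`-dimensional real inner product space (`n ≥ 2`),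
if `(n+1) ω_k (ω_i θ_j + ω_j θ_i) − 2 δ_{ij} ω_k c − δ_{kj} ω_i c − δ_{ki} ω_j c = 0`
for all `k i j`, where `c = ∑_l ω_l θ_l`, then `θ = 0`. -/
theorem eisenhart_symbol_injective (n : ℕ) (hn : 2 ≤ n)
    (ω : Fin n → ℝ) (hω : ω ≠ 0) (θ : Fin n → ℝ)
    (h : ∀ k i j, ((n : ℝ) + 1) * ω k * (ω i * θ j + ω j * θ i) -
      2 * (if i = j then (1:ℝ) else 0) * ω k * (∑ l, ω l * θ l) -
      (if k = j then (1:ℝ) else 0) * ω i * (∑ l, ω l * θ l) -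
      (if k = i then (1:ℝ) else 0) * ω j * (∑ l, ω l * θ l) = 0) :
    θ = 0 := by
  refine eq_zero_of_eisenhartSymbol_eq_zero (by simpa using hn) hω fun k i j => ?_
  simp only [eisenhartSymbol, Fintype.card_fin]
  exact h k i j
end
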